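/- The general reason ⊓I·Δ for the decision on instance I in class Δ is equivalent to the weakest NNF Γ whose literals are all implied by I and which satisfies I ⊨ Γ ⊨ Δ. That is: (a) ⊓I·Δ is equivalent to an NNF whose every literal is implied by I and satisfies I ⊨ ⊓I·Δ ⊨ Δ; and (b) any NNF Γ whose literals are implied by I and satisfying I ⊨ Γ ⊨ Δ satisfies Γ ⊨ ⊓I·Δ. -/

import Mathlib

open scoped Classical

/-- Formulas over finite-domain variables: each variable `X : V` has domain `D X`.
A literal of `X` is (intended to be) a nonempty proper subset of `D X`'s states. -/
inductive Form (V : Type) (D : V → Type) : Type where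
  | top : Form V D
  | bot : Form V D
  | lit : (X : V) → Set (D X) → Form V D
  | neg : Form V D → Form V D
  | and : Form V D → Form V D → Form V D
  | or : Form V D → Form V D → Form V D

namespace Form

variable {V : Type} {D : V → Type}

/-- Satisfaction of a formula by a world. -/
def sat (w : ∀ X, D X) : Form V D → Prop
  | top => True
  | bot => False
  | lit X s => w X ∈ s
  | neg φ => ¬ sat w φ
  | and φ ψ => sat w φ ∧ sat w ψ
  | or φ ψ => sat w φ ∨ sat w ψ

/-- Conditioning `Δ|x` of a formula on state `x` of variable `X`: each `X`-literal
`ℓ` is replaced by `⊤` if `x ∈ ℓ` and by `⊥` otherwise. -/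
noncomputable def cond (X : V) (x : D X) : Form V D → Form V D
  | top => top
  | bot => bot
  | lit Y s => if h : X = Y then (if h ▸ x ∈ s then top else bot) else lit Y s
  | neg φ => neg (cond X x φ)
  | and φ ψ => and (cond X x φ) (cond X x ψ)
  | or φ ψ => or (cond X x φ) (cond X x ψ)

/-- The selection operator `⊓x·Δ := (Δ|x) ∧ Δ`. -/
noncomputable def sel (X : V) (x : D X) (Δ : Form V D) : Form V D :=
  and (cond X x Δ) Δ

/-- Logical equivalence of formulas (same models). -/
def equiv (φ ψ : Form V D) : Prop := ∀ w, sat w φ ↔ sat w ψ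

/-- Variable `X` occurs (appears) in the formula. -/
def occurs (X : V) : Form V D → Prop
  | top => False
  | bot => False
  | lit Y _ => Y = X
  | neg φ => occurs X φ
  | and φ ψ => occurs X φ ∨ occurs X ψ
  | or φ ψ => occurs X φ ∨ occurs X ψ

/-- NNF: negation-free, and every literal is a nonempty proper subset of states. -/
def isNNF : Form V D → Prop
  | top => True
  | bot => True
  | lit _ s => s.Nonempty ∧ s ≠ Set.univ
  | neg _ => False
  | and φ ψ => isNNF φ ∧ isNNF ψ
  | or φ ψ => isNNF φ ∧ isNNF ψ

/-- The `X`-literal `s` occurs in the formula. -/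
def litOccurs (X : V) (s : Set (D X)) : Form V D → Prop
  | top => False
  | bot => False
  | lit Y t => ∃ h : Y = X, h ▸ t = s
  | neg φ => litOccurs X s φ
  | and φ ψ => litOccurs X s φ ∨ litOccurs X s ψ
  | or φ ψ => litOccurs X s φ ∨ litOccurs X s ψ

/-- Every literal in the formula is implied by the instance `I`
(i.e., contains `I`'s state of its variable). -/
def litsImp (I : ∀ X, D X) : Form V D → Prop
  | top => True
  | bot => True
  | lit X s => I X ∈ s
  | neg φ => litsImp I φ
  | and φ ψ => litsImp I φ ∧ litsImp I ψ
  | or φ ψ => litsImp I φ ∧ litsImp I ψ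

/-- Iterated selection `⊓` over a list of variables, using states from `v`. -/
noncomputable def selList (v : ∀ X, D X) : List V → Form V D → Form V D
  | [], Δ => Δ
  | X :: L, Δ => sel X (v X) (selList v L Δ)

/-- The general reason `⊓I·Δ`: selection applied for all states of instance `I`. -/
noncomputable def selAll [Fintype V] (I : ∀ X, D X) (Δ : Form V D) : Form V D :=
  selList I (Finset.univ : Finset V).toList Δ

noncomputable def listAnd : List (Form V D) → Form V D
  | [] => top
  | φ :: L => and φ (listAnd L)

/-- Universal literal quantification `∀x·Δ := (Δ|x) ∧ ⋀_{y ≠ x} (x ∨ Δ|y)`. -/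
noncomputable def uq (X : V) [Fintype (D X)] (x : D X) (Δ : Form V D) : Form V D :=
  letI : DecidableEq (D X) := fun _ _ => Classical.propDecidable _
  and (cond X x Δ)
    (listAnd ((((Finset.univ : Finset (D X)).erase x).toList).map
      (fun y => or (lit X ({x} : Set (D X))) (cond X y Δ))))

/-- Iterated universal literal quantification over a list of variables. -/
noncomputable def uqList [∀ X, Fintype (D X)] (v : ∀ X, D X) : List V → Form V D → Form V D
  | [], Δ => Δ
  | X :: L, Δ => uq X (v X) (uqList v L Δ)

/-- The complete reason `∀I·Δ`. -/
noncomputable def uqAll [Fintype V] [∀ X, Fintype (D X)] (I : ∀ X, D X) (Δ : Form V D) :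
    Form V D :=
  uqList I (Finset.univ : Finset V).toList Δ

end Form

/-- A term: a conjunction of literals over distinct variables. Variable `X` is
mentioned iff `lits X ≠ univ`; each literal is nonempty (terms are consistent). -/
structure MvTerm (V : Type) (D : V → Type) : Type where
  lits : ∀ X, Set (D X)
  nonempty : ∀ X, (lits X).Nonempty

/-- A clause: a disjunction of literals over distinct variables. Variable `X` is
mentioned iff `lits X ≠ ∅`; each literal is proper (clauses are never valid). -/
structure MvClause (V : Type) (D : V → Type) : Type where
  lits : ∀ X, Set (D X)
  proper : ∀ X, lits X ≠ Set.univ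

namespace MvTerm

variable {V : Type} {D : V → Type}

def tsat (w : ∀ X, D X) (τ : MvTerm V D) : Prop := ∀ X, w X ∈ τ.lits X

def vars (τ : MvTerm V D) : Set V := {X | τ.lits X ≠ Set.univ}

/-- A simple term assigns a single state to each of its variables. -/
def simple (τ : MvTerm V D) : Prop :=
  ∀ X, τ.lits X ≠ Set.univ → ∃ x, τ.lits X = ({x} : Set (D X))

end MvTerm

namespace MvClause

variable {V : Type} {D : V → Type}

def csat (w : ∀ X, D X) (σ : MvClause V D) : Prop := ∃ X, w X ∈ σ.lits X

def vars (σ : MvClause V D) : Set V := {X | σ.lits X ≠ (∅ : Set (D X))}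

/-- A simple clause: all its literals are single states. -/
def simple (σ : MvClause V D) : Prop :=
  ∀ X, σ.lits X ≠ (∅ : Set (D X)) → ∃ x, σ.lits X = ({x} : Set (D X))

end MvClause

section PrimeDefs

variable {V : Type} {D : V → Type}

def termImp (τ τ' : MvTerm V D) : Prop := ∀ w, τ.tsat w → τ'.tsat w

def clauseImp (σ σ' : MvClause V D) : Prop := ∀ w, σ.csat w → σ'.csat w

/-- A prime implicant of the set of worlds `M`: a ⊨-maximal term implying `M`. -/
def isPrimeImplicantOf (M : (∀ X, D X) → Prop) (τ : MvTerm V D) : Prop :=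
  (∀ w, τ.tsat w → M w) ∧
  ∀ τ' : MvTerm V D, (∀ w, τ'.tsat w → M w) → termImp τ τ' → τ' = τ

/-- A prime implicate of the set of worlds `M`: a ⊨-minimal clause implied by `M`. -/
def isPrimeImplicateOf (M : (∀ X, D X) → Prop) (σ : MvClause V D) : Prop :=
  (∀ w, M w → σ.csat w) ∧
  ∀ σ' : MvClause V D, (∀ w, M w → σ'.csat w) → clauseImp σ' σ → σ' = σ

/-- Remove subsumed terms: delete any term strictly implied by another in the set. -/
def removeSubsumedT (S : Set (MvTerm V D)) : Set (MvTerm V D) :=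
  {τ ∈ S | ¬ ∃ τ' ∈ S, τ' ≠ τ ∧ termImp τ τ'}

/-- Remove subsumed clauses: delete any clause strictly implying another in the set. -/
def removeSubsumedC (S : Set (MvClause V D)) : Set (MvClause V D) :=
  {σ ∈ S | ¬ ∃ σ' ∈ S, σ' ≠ σ ∧ clauseImp σ' σ}

end PrimeDefs

/-! A world `w` satisfies `⊓I·Δ` iff every world obtained from `w` by moving some variables
to their `I`-state satisfies `Δ`. The models of an NNF whose literals are implied by `I` are
closed under such moves, which gives (b). Conversely, every set of worlds closed under them is
defined by such an NNF, the disjunction over its members `w` of the terms `⋀_X X ∈ {w X, I X}`,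
which gives (a). -/

namespace Form

variable {V : Type} {D : V → Type}

theorem sat_cond (w : ∀ X, D X) (X : V) (x : D X) (φ : Form V D) :
    sat w (cond X x φ) ↔ sat (Function.update w X x) φ := by
  induction φ with
  | top | bot => rfl
  | lit Y s =>
    by_cases h : X = Y
    · subst h
      by_cases hx : x ∈ s <;> simp [cond, sat, hx]
    · simp [cond, sat, h, Function.update_of_ne (Ne.symm h)]
  | neg φ ih => simp only [cond, sat, ih]
  | and φ ψ ih₁ ih₂ | or φ ψ ih₁ ih₂ => simp only [cond, sat, ih₁, ih₂]

theorem sat_sel (w : ∀ X, D X) (X : V) (x : D X) (φ : Form V D) :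
    sat w (sel X x φ) ↔ sat (Function.update w X x) φ ∧ sat w φ := by
  rw [sel, sat, sat_cond]

theorem sat_selList (I : ∀ X, D X) (Δ : Form V D) (L : List V) (w : ∀ X, D X) :
    sat w (selList I L Δ) ↔
      ∀ v : ∀ X, D X, (∀ X, v X = w X ∨ X ∈ L ∧ v X = I X) → sat v Δ := by
  induction L generalizing w with
  | nil =>
    simp only [selList, List.not_mem_nil, false_and, or_false]
    exact ⟨fun h v hv => (funext hv : v = w) ▸ h, fun h => h w fun _ => rfl⟩
  | cons Y L ih =>
    rw [selList, sat_sel, ih, ih]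
    constructor
    · rintro ⟨hmoved, hkept⟩ v hv
      by_cases hY : v Y = I Y
      · refine hmoved v fun X => ?_
        by_cases hXY : X = Y
        · subst hXY; exact Or.inl (by rw [Function.update_self, hY])
        · rw [Function.update_of_ne hXY]
          simpa [hXY] using hv X
      · refine hkept v fun X => ?_
        by_cases hXY : X = Y
        · subst hXY; simpa [hY] using hv X
        · simpa [hXY] using hv X
    · intro h
      refine ⟨fun v hv => h v fun X => ?_, fun v hv => h v fun X => ?_⟩
      · by_cases hXY : X = Y
        · subst hXY
          have hvX := hv X
          rw [Function.update_self] at hvX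
          exact Or.inr ⟨List.mem_cons_self, hvX.elim id And.right⟩
        · simpa [hXY, Function.update_of_ne hXY] using hv X
      · exact (hv X).imp_right (And.imp_left (List.mem_cons_of_mem Y))

theorem sat_selAll [Fintype V] (I : ∀ X, D X) (Δ : Form V D) (w : ∀ X, D X) :
    sat w (selAll I Δ) ↔ ∀ v : ∀ X, D X, (∀ X, v X = w X ∨ v X = I X) → sat v Δ := by
  simp only [selAll, sat_selList, Finset.mem_toList, Finset.mem_univ, true_and]

theorem sat_of_isNNF_of_litsImp {I : ∀ X, D X} {Γ : Form V D} (hΓ : isNNF Γ)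
    (hI : litsImp I Γ) {w v : ∀ X, D X} (hv : ∀ X, v X = w X ∨ v X = I X) (hw : sat w Γ) :
    sat v Γ := by
  induction Γ with
  | top | bot => exact hw
  | lit X s => rcases hv X with h | h <;> simp only [sat, h] <;> assumption
  | neg => exact hΓ.elim
  | and φ ψ ih₁ ih₂ => exact ⟨ih₁ hΓ.1 hI.1 hw.1, ih₂ hΓ.2 hI.2 hw.2⟩
  | or φ ψ ih₁ ih₂ => exact hw.imp (ih₁ hΓ.1 hI.1) (ih₂ hΓ.2 hI.2)

def NNFDefinable (I : ∀ X, D X) (M : (∀ X, D X) → Prop) : Prop :=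
  ∃ Γ : Form V D, isNNF Γ ∧ litsImp I Γ ∧ ∀ w, sat w Γ ↔ M w

namespace NNFDefinable

variable {I : ∀ X, D X}

theorem mem {X : V} {s : Set (D X)} (hs : I X ∈ s) :
    NNFDefinable I fun w => w X ∈ s := by
  by_cases huniv : s = Set.univ
  · exact ⟨top, trivial, trivial, fun w => by simp [sat, huniv]⟩
  · exact ⟨lit X s, ⟨⟨I X, hs⟩, huniv⟩, hs, fun _ => Iff.rfl⟩

theorem finset_forall {ι : Type*} (s : Finset ι) {P : ι → (∀ X, D X) → Prop}
    (hP : ∀ i ∈ s, NNFDefinable I (P i)) : NNFDefinable I fun w => ∀ i ∈ s, P i w := by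
  induction s using Finset.induction_on with
  | empty => exact ⟨top, trivial, trivial, fun w => by simp [sat]⟩
  | insert i s _ ih =>
    obtain ⟨φ, hφ, hφI, hφP⟩ := hP i (Finset.mem_insert_self i s)
    obtain ⟨Γ, hΓ, hΓI, hΓP⟩ := ih fun j hj => hP j (Finset.mem_insert_of_mem hj)
    exact ⟨and φ Γ, ⟨hφ, hΓ⟩, ⟨hφI, hΓI⟩, fun w => by simp [sat, hφP, hΓP]⟩

theorem finset_exists {ι : Type*} (s : Finset ι) {P : ι → (∀ X, D X) → Prop}
    (hP : ∀ i ∈ s, NNFDefinable I (P i)) : NNFDefinable I fun w => ∃ i ∈ s, P i w := by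
  induction s using Finset.induction_on with
  | empty => exact ⟨bot, trivial, trivial, fun w => by simp [sat]⟩
  | insert i s _ ih =>
    obtain ⟨φ, hφ, hφI, hφP⟩ := hP i (Finset.mem_insert_self i s)
    obtain ⟨Γ, hΓ, hΓI, hΓP⟩ := ih fun j hj => hP j (Finset.mem_insert_of_mem hj)
    exact ⟨or φ Γ, ⟨hφ, hΓ⟩, ⟨hφI, hΓI⟩, fun w => by simp [sat, hφP, hΓP]⟩

theorem of_closed [Fintype V] [∀ X, Fintype (D X)] {M : (∀ X, D X) → Prop}
    (hM : ∀ w v, M w → (∀ X, v X = w X ∨ v X = I X) → M v) : NNFDefinable I M := by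
  have hdef : NNFDefinable I fun v =>
      ∃ w ∈ {w | M w}.toFinset, ∀ X ∈ Finset.univ, v X ∈ ({w X, I X} : Set (D X)) :=
    finset_exists _ fun w _ => finset_forall _ fun X _ => mem (by simp)
  refine hdef.imp fun Γ ⟨hΓ, hΓI, hΓM⟩ => ⟨hΓ, hΓI, fun v => ?_⟩
  simp only [hΓM, Set.mem_toFinset, Set.mem_ofPred_eq, Finset.mem_univ, true_implies,
    Set.mem_insert_iff, Set.mem_singleton_iff]
  exact ⟨fun ⟨w, hw, hv⟩ => hM w v hw hv, fun hv => ⟨v, hv, fun _ => Or.inl rfl⟩⟩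

end NNFDefinable

end Form

open Form in
/-- the general reason `⊓I·Δ` is the weakest NNF whose literals are
implied by `I` and that satisfies `I ⊨ Γ ⊨ Δ`: (a) `⊓I·Δ` is equivalent to such
an NNF and satisfies `I ⊨ ⊓I·Δ ⊨ Δ`; (b) any such NNF `Γ` satisfies `Γ ⊨ ⊓I·Δ`. -/
theorem general_reason_weakest_nnf {V : Type} {D : V → Type}
    [Fintype V] [∀ X, Fintype (D X)] (Δ : Form V D) (I : ∀ X, D X)
    (hI : Form.sat I Δ) :
    (∃ Γ : Form V D, Form.isNNF Γ ∧ Form.litsImp I Γ ∧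
        Form.equiv Γ (Form.selAll I Δ)) ∧
    Form.sat I (Form.selAll I Δ) ∧
    (∀ w, Form.sat w (Form.selAll I Δ) → Form.sat w Δ) ∧
    (∀ Γ : Form V D, Form.isNNF Γ → Form.litsImp I Γ →
      Form.sat I Γ → (∀ w, Form.sat w Γ → Form.sat w Δ) →
      ∀ w, Form.sat w Γ → Form.sat w (Form.selAll I Δ)) := by
  have hclosed : ∀ w v, sat w (selAll I Δ) → (∀ X, v X = w X ∨ v X = I X) →
      sat v (selAll I Δ) := by
    simp only [sat_selAll]
    intro w v hw hv u hu
    exact hw u fun X => (hu X).elim (fun h => (hv X).imp h.trans h.trans) Or.inr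
  refine ⟨NNFDefinable.of_closed hclosed, ?_, ?_, ?_⟩
  · rw [sat_selAll]
    intro v hv
    rwa [show v = I from funext fun X => (hv X).elim id id]
  · intro w hw
    exact (sat_selAll I Δ w).1 hw w fun _ => Or.inl rfl
  · intro Γ hΓ hΓI _ hΓΔ w hw
    rw [sat_selAll]
    exact fun v hv => hΓΔ v (sat_of_isNNF_of_litsImp hΓ hΓI hv hw)
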